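/- Let d ≥ 1, let β : Fin d → ℝ have all partial sums c_k := β_0 + ⋯ + β_k strictly positive (0 ≤ k ≤ d−1), let N ∈ ℤ and x ∈ ℝ. For each natural number t ≥ 1, the family exp((x + q_0β_0 + ⋯ + q_{d−1}β_{d−1})/t), indexed by strictly increasing integer tuples q : Fin d → ℤ with q_{d−1} < N, is summable; and as t → ∞, (1/t^d) times its sum converges to ∏_{k=0}^{d−1} (1/c_k). -/

import Mathlib

lemma geomPi {d : ℕ} (r : Fin d → ℝ) (h0 : ∀ i, 0 ≤ r i) (h1 : ∀ i, r i < 1) :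
    Summable (fun a : Fin d → ℕ => ∏ i, r i ^ a i) ∧
    ∑' a : Fin d → ℕ, ∏ i, r i ^ a i = ∏ i, (1 - r i)⁻¹ := by
  induction d with
  | zero =>
    haveI : Unique (Fin 0 → ℕ) := ⟨⟨fun i => i.elim0⟩, fun a => funext fun i => i.elim0⟩
    constructor
    · exact .of_finite
    · simp [tsum_eq_single (default : Fin 0 → ℕ)
        (fun b hb => absurd (Subsingleton.elim b default) hb)]
  | succ n ih =>
    set e := Fin.consEquiv (fun _ : Fin (n + 1) => ℕ) with he
    have key : ∀ p : ℕ × (Fin n → ℕ),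
        (∏ i, r i ^ (e p) i) = (r 0 ^ p.1) * ∏ i : Fin n, (r i.succ) ^ (p.2 i) := by
      intro p
      rw [Fin.prod_univ_succ]
      simp [he, Fin.consEquiv]
    have hs1 : Summable (fun m : ℕ => r 0 ^ m) :=
      summable_geometric_of_lt_one (h0 0) (h1 0)
    obtain ⟨hs2, ht2⟩ := ih (fun i => r i.succ) (fun i => h0 _) (fun i => h1 _)
    have hsp : Summable (fun p : ℕ × (Fin n → ℕ) =>
        (r 0 ^ p.1) * ∏ i : Fin n, (r i.succ) ^ (p.2 i)) :=
      by
        apply Summable.mul_of_nonneg hs1 hs2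
        · exact fun m => pow_nonneg (h0 0) m
        · exact fun a => Finset.prod_nonneg fun i _ => pow_nonneg (h0 _) _
    have hsum : Summable (fun a : Fin (n+1) → ℕ => ∏ i, r i ^ a i) := by
      rw [← e.summable_iff]
      exact hsp.congr (fun p => (key p).symm)
    refine ⟨hsum, ?_⟩
    rw [← e.tsum_eq]
    calc ∑' p : ℕ × (Fin n → ℕ), ∏ i, r i ^ (e p) i
        = ∑' p : ℕ × (Fin n → ℕ), (r 0 ^ p.1) * ∏ i : Fin n, (r i.succ) ^ (p.2 i) :=
          tsum_congr key
      _ = (∑' m : ℕ, r 0 ^ m) * ∑' a : Fin n → ℕ, ∏ i : Fin n, (r i.succ) ^ (a i) :=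
          (tsum_mul_tsum_of_summable_norm
            (hs1.congr fun m => (Real.norm_of_nonneg (pow_nonneg (h0 0) m)).symm)
            (hs2.congr fun a => (Real.norm_of_nonneg
              (Finset.prod_nonneg fun i _ => pow_nonneg (h0 _) _)).symm)).symm
      _ = ∏ i : Fin (n+1), (1 - r i)⁻¹ := by
          rw [tsum_geometric_of_lt_one (h0 0) (h1 0), ht2, Fin.prod_univ_succ]
open Filter

lemma lim1 {c : ℝ} (hc : 0 < c) :
    Tendsto (fun t : ℕ => (t : ℝ) * (1 - Real.exp (-c / t))) atTop (nhds c) := by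
  have hderiv : HasDerivAt (fun s : ℝ => Real.exp (-(c * s))) (-c) 0 := by
    have h1 : HasDerivAt (fun s : ℝ => -(c * s)) (-c) 0 := by
      simpa using ((hasDerivAt_id (0:ℝ)).const_mul c).fun_neg
    simpa using h1.exp
  have hslope := hasDerivAt_iff_tendsto_slope.mp hderiv
  have hts : Tendsto (fun t : ℕ => 1 / (t : ℝ)) atTop (nhdsWithin 0 {x | x ≠ 0}) := by
    apply tendsto_nhdsWithin_of_tendsto_nhds_of_eventually_within _
      tendsto_one_div_atTop_nhds_zero_nat
    filter_upwards [eventually_ge_atTop 1] with t ht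
    have : (0:ℝ) < 1 / t := by positivity
    exact ne_of_gt this
  have h2 := (hslope.comp hts).neg
  rw [neg_neg] at h2
  refine h2.congr' ?_
  filter_upwards [eventually_ge_atTop 1] with t ht
  have htpos : (0:ℝ) < t := by exact_mod_cast ht
  have ht0 : (t:ℝ) ≠ 0 := ne_of_gt htpos
  simp only [Function.comp_apply, slope_def_field]
  rw [mul_comm]
  have h3 : -(c * (1 / (t:ℝ))) = -c / t := by ring
  field_simp [h3]
  simp only [mul_zero, neg_zero, Real.exp_zero, sub_zero, one_mul]; ring

variable {d : ℕ}

lemma Ici_eq_filter (k : Fin d) :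
    Finset.Ici k = Finset.univ.filter (fun j => k ≤ j) := by ext j; simp

lemma Iic_eq_filter (k : Fin d) :
    Finset.Iic k = Finset.univ.filter (fun j => j ≤ k) := by ext j; simp

/-- The parametrization map. -/
def Fmap (d : ℕ) (N : ℤ) (a : Fin d → ℕ) : Fin d → ℤ :=
  fun k => N - ∑ j ∈ Finset.Ici k, ((a j : ℤ) + 1)

lemma Ici_insert {m : ℕ} (hm : m + 1 < d) :
    Finset.Ici (⟨m, by omega⟩ : Fin d) =
      insert (⟨m, by omega⟩ : Fin d) (Finset.Ici (⟨m + 1, hm⟩ : Fin d)) := by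
  ext j
  simp only [Finset.mem_Ici, Finset.mem_insert, Fin.le_def, Fin.ext_iff]
  omega

lemma not_mem_Ici_succ {m : ℕ} (hm : m + 1 < d) :
    (⟨m, by omega⟩ : Fin d) ∉ Finset.Ici (⟨m + 1, hm⟩ : Fin d) := by
  simp [Fin.le_def]

lemma Fmap_strictMono (N : ℤ) (a : Fin d → ℕ) : StrictMono (Fmap d N a) := by
  intro k l hkl
  have hsub : Finset.Ici l ⊆ Finset.Ici k := Finset.Ici_subset_Ici.mpr hkl.le
  have : ∑ j ∈ Finset.Ici l, ((a j : ℤ) + 1) < ∑ j ∈ Finset.Ici k, ((a j : ℤ) + 1) := by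
    refine Finset.sum_lt_sum_of_subset hsub (i := k) (by simp) (by simpa using not_le.mpr hkl) (by positivity) ?_
    intro j _ _; positivity
  simp only [Fmap]
  omega

lemma Fmap_lt (hd : 1 ≤ d) (N : ℤ) (a : Fin d → ℕ) :
    Fmap d N a ⟨d - 1, Nat.sub_lt hd Nat.one_pos⟩ < N := by
  have hIci : Finset.Ici (⟨d - 1, Nat.sub_lt hd Nat.one_pos⟩ : Fin d) = {⟨d - 1, Nat.sub_lt hd Nat.one_pos⟩} := by
    ext j
    simp only [Finset.mem_Ici, Finset.mem_singleton, Fin.le_def, Fin.ext_iff]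
    have := j.isLt
    omega
  simp only [Fmap, hIci, Finset.sum_singleton]
  omega

lemma Fmap_bijective (hd : 1 ≤ d) (N : ℤ) :
    Function.Bijective (fun a : Fin d → ℕ =>
      (⟨Fmap d N a, Fmap_strictMono N a, Fmap_lt hd N a⟩ :
        {q : Fin d → ℤ // StrictMono q ∧ q ⟨d - 1, Nat.sub_lt hd Nat.one_pos⟩ < N})) := by
  constructor
  · intro a a' h
    have hS : ∀ k : Fin d, ∑ j ∈ Finset.Ici k, ((a j : ℤ) + 1)
        = ∑ j ∈ Finset.Ici k, ((a' j : ℤ) + 1) := by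
      intro k
      have := congrFun (congrArg Subtype.val h) k
      simp only [Fmap] at this
      omega
    funext k
    rcases Nat.lt_or_ge ((k : ℕ) + 1) d with hk | hk
    · have h1 := hS ⟨k, k.isLt⟩
      have h2 := hS ⟨(k : ℕ) + 1, hk⟩
      rw [Ici_insert hk, Finset.sum_insert (not_mem_Ici_succ hk),
        Finset.sum_insert (not_mem_Ici_succ hk)] at h1
      have hkk : (⟨(k : ℕ), by omega⟩ : Fin d) = k := by ext; rfl
      rw [hkk] at h1
      omega
    · -- k is the last index
      have hIci : Finset.Ici k = {k} := by
        ext j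
        simp only [Finset.mem_Ici, Finset.mem_singleton, Fin.le_def, Fin.ext_iff]
        have := j.isLt
        omega
      have h1 := hS k
      rw [hIci, Finset.sum_singleton, Finset.sum_singleton] at h1
      omega
  · rintro ⟨q, hmono, hlast⟩
    refine ⟨fun k => if h : (k : ℕ) + 1 < d then (q ⟨(k : ℕ) + 1, h⟩ - q k - 1).toNat
      else (N - 1 - q k).toNat, ?_⟩
    set a : Fin d → ℕ := fun k => if h : (k : ℕ) + 1 < d then (q ⟨(k : ℕ) + 1, h⟩ - q k - 1).toNat
      else (N - 1 - q k).toNat with ha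
    have key : ∀ i : ℕ, ∀ m : ℕ, ∀ _hm : m + i + 1 = d,
        ∑ j ∈ Finset.Ici (⟨m, by omega⟩ : Fin d), ((a j : ℤ) + 1) = N - q ⟨m, by omega⟩ := by
      intro i
      induction i with
      | zero =>
        intro m _hm
        have hIci : Finset.Ici (⟨m, by omega⟩ : Fin d) = {⟨m, by omega⟩} := by
          ext j
          simp only [Finset.mem_Ici, Finset.mem_singleton, Fin.le_def, Fin.ext_iff]
          have := j.isLt
          omega
        rw [hIci, Finset.sum_singleton]
        have ham : a ⟨m, by omega⟩ = (N - 1 - q ⟨m, by omega⟩).toNat := by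
          rw [ha]; simp only []; rw [dif_neg (by omega)]
        have hq : q ⟨m, by omega⟩ < N := by
          have : (⟨m, by omega⟩ : Fin d) = ⟨d - 1, by omega⟩ := by simp only [Fin.mk.injEq]; omega
          rw [this]; exact hlast
        rw [ham, Int.toNat_of_nonneg (by omega)]
        ring
      | succ i ih =>
        intro m _hm
        have hm1 : m + 1 < d := by omega
        rw [Ici_insert hm1, Finset.sum_insert (not_mem_Ici_succ hm1)]
        rw [ih (m + 1) (by omega)]
        have ham : a ⟨m, by omega⟩ = (q ⟨m + 1, hm1⟩ - q ⟨m, by omega⟩ - 1).toNat := by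
          rw [ha]; simp only []; rw [dif_pos hm1]
        have hq : q ⟨m, by omega⟩ < q ⟨m + 1, hm1⟩ := hmono (by simp [Fin.lt_def])
        rw [ham, Int.toNat_of_nonneg (by omega)]
        ring
    apply Subtype.ext
    funext k
    have := key (d - 1 - (k : ℕ)) (k : ℕ) (by have := k.isLt; omega)
    have hkk : (⟨(k : ℕ), by omega⟩ : Fin d) = k := by ext; rfl
    rw [hkk] at this
    simp only [Fmap]
    omega

lemma sum_swap' (f g : Fin d → ℝ) :
    ∑ k, (∑ j ∈ Finset.Ici k, g j) * f k = ∑ j, g j * ∑ k ∈ Finset.Iic j, f k := by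
  calc ∑ k, (∑ j ∈ Finset.Ici k, g j) * f k
      = ∑ k, ∑ j, (if k ≤ j then g j * f k else 0) := by
        refine Finset.sum_congr rfl fun k _ => ?_
        rw [Finset.sum_mul, Ici_eq_filter, Finset.sum_filter]
    _ = ∑ j, ∑ k, (if k ≤ j then g j * f k else 0) := Finset.sum_comm
    _ = ∑ j, g j * ∑ k ∈ Finset.Iic j, f k := by
        refine Finset.sum_congr rfl fun j _ => ?_
        rw [Finset.mul_sum, Iic_eq_filter, Finset.sum_filter]

lemma exponent_eq (β : Fin d → ℝ) (N : ℤ) (x : ℝ) (a : Fin d → ℕ) :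
    x + ∑ k, ((Fmap d N a k : ℤ) : ℝ) * β k
      = (x + (N : ℝ) * ∑ k, β k - ∑ j, (∑ i ∈ Finset.Iic j, β i))
        - ∑ j, (a j : ℝ) * (∑ i ∈ Finset.Iic j, β i) := by
  have h1 : ∑ k, ((N:ℝ) - ∑ j ∈ Finset.Ici k, ((a j : ℝ) + 1)) * β k
      = (N:ℝ) * ∑ k, β k - ∑ j, ((a j : ℝ) + 1) * ∑ i ∈ Finset.Iic j, β i := by
    rw [← sum_swap', Finset.mul_sum, ← Finset.sum_sub_distrib]
    exact Finset.sum_congr rfl fun k _ => by ring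
  have h2 : ∑ k, ((Fmap d N a k : ℤ) : ℝ) * β k
      = ∑ k, ((N:ℝ) - ∑ j ∈ Finset.Ici k, ((a j : ℝ) + 1)) * β k := by
    refine Finset.sum_congr rfl fun k _ => ?_
    simp only [Fmap]
    push_cast
    ring
  have h3 : ∑ j, ((a j : ℝ) + 1) * ∑ i ∈ Finset.Iic j, β i
      = ∑ j, (a j : ℝ) * (∑ i ∈ Finset.Iic j, β i) + ∑ j, (∑ i ∈ Finset.Iic j, β i) := by
    rw [← Finset.sum_add_distrib]
    exact Finset.sum_congr rfl fun j _ => by ring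
  rw [h2, h1, h3]
  ring

lemma term_eq (hd : 1 ≤ d) (β : Fin d → ℝ) (N : ℤ) (x : ℝ) (t : ℕ) (ht : 1 ≤ t)
    (a : Fin d → ℕ) :
    Real.exp ((x + ∑ k, ((Fmap d N a k : ℤ) : ℝ) * β k) / t)
      = Real.exp ((x + (N : ℝ) * ∑ k, β k - ∑ j, (∑ i ∈ Finset.Iic j, β i)) / t)
        * ∏ j, (Real.exp (-(∑ i ∈ Finset.Iic j, β i) / t)) ^ a j := by
  have hsum : (x + ∑ k, ((Fmap d N a k : ℤ) : ℝ) * β k) / t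
      = (x + (N : ℝ) * ∑ k, β k - ∑ j, (∑ i ∈ Finset.Iic j, β i)) / t
        + ∑ j, (a j : ℝ) * (-(∑ i ∈ Finset.Iic j, β i) / t) := by
    have : ∑ j, (a j : ℝ) * (-(∑ i ∈ Finset.Iic j, β i) / t)
        = -((∑ j, (a j : ℝ) * (∑ i ∈ Finset.Iic j, β i)) / t) := by
      rw [Finset.sum_div, ← Finset.sum_neg_distrib]
      exact Finset.sum_congr rfl fun j _ => by ring
    rw [exponent_eq, this, sub_div]
    ring
  rw [hsum, Real.exp_add, Real.exp_sum]
  congr 1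
  exact Finset.prod_congr rfl fun j _ => Real.exp_nat_mul _ _

lemma tsum_eval (hd : 1 ≤ d) (β : Fin d → ℝ)
    (hpos : ∀ k : Fin d, 0 < ∑ j ∈ Finset.Iic k, β j) (N : ℤ) (x : ℝ)
    (t : ℕ) (ht : 1 ≤ t) :
    Summable (fun q : {q : Fin d → ℤ // StrictMono q ∧ q ⟨d - 1, Nat.sub_lt hd Nat.one_pos⟩ < N} =>
        Real.exp ((x + ∑ k : Fin d, (q.1 k : ℝ) * β k) / (t : ℝ))) ∧
    ∑' q : {q : Fin d → ℤ // StrictMono q ∧ q ⟨d - 1, Nat.sub_lt hd Nat.one_pos⟩ < N},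
        Real.exp ((x + ∑ k : Fin d, (q.1 k : ℝ) * β k) / (t : ℝ))
      = Real.exp ((x + (N : ℝ) * ∑ k, β k - ∑ j, (∑ i ∈ Finset.Iic j, β i)) / t)
        * ∏ j, (1 - Real.exp (-(∑ i ∈ Finset.Iic j, β i) / t))⁻¹ := by
  have htpos : (0:ℝ) < t := by exact_mod_cast ht
  have hr0 : ∀ j : Fin d, 0 ≤ Real.exp (-(∑ i ∈ Finset.Iic j, β i) / t) :=
    fun j => (Real.exp_pos _).le
  have hr1 : ∀ j : Fin d, Real.exp (-(∑ i ∈ Finset.Iic j, β i) / t) < 1 := by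
    intro j
    rw [Real.exp_lt_one_iff]
    have := hpos j
    rw [neg_div]
    simpa using div_pos this htpos
  obtain ⟨hsumg, htsumg⟩ := geomPi (fun j => Real.exp (-(∑ i ∈ Finset.Iic j, β i) / t)) hr0 hr1
  set E := Equiv.ofBijective _ (Fmap_bijective hd N) with hE
  have hcomp : ∀ a : Fin d → ℕ,
      Real.exp ((x + ∑ k : Fin d, (((E a).1 : Fin d → ℤ) k : ℝ) * β k) / (t : ℝ))
        = Real.exp ((x + (N : ℝ) * ∑ k, β k - ∑ j, (∑ i ∈ Finset.Iic j, β i)) / t)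
          * ∏ j, (Real.exp (-(∑ i ∈ Finset.Iic j, β i) / t)) ^ a j := by
    intro a
    exact term_eq hd β N x t ht a
  constructor
  · rw [← E.summable_iff]
    apply Summable.congr ((hsumg.mul_left _))
    intro a
    exact (hcomp a).symm
  · rw [← E.tsum_eq]
    rw [tsum_congr hcomp, tsum_mul_left, htsumg]

theorem stmt_3 (d : ℕ) (hd : 1 ≤ d) (β : Fin d → ℝ)
    (hpos : ∀ k : Fin d, 0 < ∑ j ∈ Finset.Iic k, β j) (N : ℤ) (x : ℝ) :
    (∀ t : ℕ, 1 ≤ t →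
        Summable (fun q : {q : Fin d → ℤ // StrictMono q ∧ q ⟨d - 1, by omega⟩ < N} =>
          Real.exp ((x + ∑ k : Fin d, (q.1 k : ℝ) * β k) / (t : ℝ)))) ∧
      Filter.Tendsto
        (fun t : ℕ => (1 / (t : ℝ) ^ d) *
          ∑' q : {q : Fin d → ℤ // StrictMono q ∧ q ⟨d - 1, by omega⟩ < N},
            Real.exp ((x + ∑ k : Fin d, (q.1 k : ℝ) * β k) / (t : ℝ)))
        Filter.atTop
        (nhds (∏ k : Fin d, (∑ j ∈ Finset.Iic k, β j)⁻¹)) := by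
  refine ⟨fun t ht => (tsum_eval hd β hpos N x t ht).1, ?_⟩
  have hX : Filter.Tendsto (fun t : ℕ =>
      Real.exp ((x + (N : ℝ) * ∑ k, β k - ∑ j, (∑ i ∈ Finset.Iic j, β i)) / t))
      Filter.atTop (nhds 1) := by
    set X := x + (N : ℝ) * ∑ k, β k - ∑ j, (∑ i ∈ Finset.Iic j, β i) with hXdef
    have h0 : Filter.Tendsto (fun t : ℕ => X / (t : ℝ)) Filter.atTop (nhds 0) := by
      simpa [mul_one_div, div_eq_mul_inv] using tendsto_one_div_atTop_nhds_zero_nat.const_mul X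
    have := (Real.continuous_exp.tendsto 0).comp h0
    simpa [Function.comp_def] using this
  have hprod : Filter.Tendsto (fun t : ℕ =>
      ∏ j : Fin d, ((t : ℝ) * (1 - Real.exp (-(∑ i ∈ Finset.Iic j, β i) / t)))⁻¹)
      Filter.atTop (nhds (∏ j : Fin d, (∑ i ∈ Finset.Iic j, β i)⁻¹)) := by
    apply tendsto_finset_prod
    intro j _
    exact (lim1 (hpos j)).inv₀ (ne_of_gt (hpos j))
  have hmain := hX.mul hprod
  rw [one_mul] at hmain
  refine Filter.Tendsto.congr' ?_ hmain
  filter_upwards [Filter.eventually_ge_atTop 1] with t ht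
  have htpos : (0:ℝ) < t := by exact_mod_cast ht
  rw [(tsum_eval hd β hpos N x t ht).2]
  have hconst : ∏ _j : Fin d, ((t : ℝ))⁻¹ = 1 / (t : ℝ) ^ d := by
    simp [Finset.prod_const, Finset.card_univ, inv_pow, one_div]
  calc Real.exp ((x + (N : ℝ) * ∑ k, β k - ∑ j, (∑ i ∈ Finset.Iic j, β i)) / t)
        * ∏ j : Fin d, ((t : ℝ) * (1 - Real.exp (-(∑ i ∈ Finset.Iic j, β i) / t)))⁻¹
      = Real.exp ((x + (N : ℝ) * ∑ k, β k - ∑ j, (∑ i ∈ Finset.Iic j, β i)) / t)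
        * ((∏ _j : Fin d, ((t : ℝ))⁻¹)
          * ∏ j : Fin d, (1 - Real.exp (-(∑ i ∈ Finset.Iic j, β i) / t))⁻¹) := by
        rw [← Finset.prod_mul_distrib]
        congr 1
        exact Finset.prod_congr rfl fun j _ => mul_inv _ _
    _ = (1 / (t : ℝ) ^ d) *
        (Real.exp ((x + (N : ℝ) * ∑ k, β k - ∑ j, (∑ i ∈ Finset.Iic j, β i)) / t)
          * ∏ j : Fin d, (1 - Real.exp (-(∑ i ∈ Finset.Iic j, β i) / t))⁻¹) := by
        rw [hconst]; ring
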